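/- Suppose L_s = U Λ_s Uᵀ and L_t = U Λ_t Uᵀ are real symmetric n×n matrices sharing the orthogonal eigenvector matrix U, with Λ_s = diag(λ_{s,1},…,λ_{s,n}) and Λ_t = diag(λ_{t,1},…,λ_{t,n}). Let g_θ be a polynomial satisfying |g_θ(λ_{s,i}) − g_θ(λ_{t,i})| ≤ C_λ |λ_{s,i} − λ_{t,i}| for all i, let σ : ℝ → ℝ satisfy |σ(b) − σ(a)| ≤ |b − a|, let X_s, X_t be n×d feature matrices with ‖X_s‖_F ≤ 1, and let W be a d×d' matrix with ‖W‖_op ≤ 1. Then the GNN outputs f(L, X) = σ(g_θ(L) X W) (σ applied entrywise) satisfy ‖f(L_s, X_s) − f(L_t, X_t)‖_F ≤ C_λ ‖L_s − L_t‖_F + (max_{1≤i≤n} |g_θ(λ_{t,i})|) ‖X_s − X_t‖_F. -/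

import Mathlib

open scoped Matrix

/-- Frobenius norm of a real matrix. -/
noncomputable def frobNorm {n m : ℕ} (A : Matrix (Fin n) (Fin m) ℝ) : ℝ :=
  Real.sqrt (∑ i, ∑ j, (A i j) ^ 2)

/-- Operator norm of a real matrix, induced by the Euclidean norms. -/
noncomputable def opNorm {n m : ℕ} (A : Matrix (Fin m) (Fin n) ℝ) : ℝ :=
  ‖(LinearMap.toContinuousLinearMap (Matrix.toEuclideanLin A))‖

/-- The polynomial filter `g_θ(λ) = ∑_{k=0}^{K} θ_k λ^k` applied to a scalar. -/
noncomputable def gpoly (K : ℕ) (θ : ℕ → ℝ) (x : ℝ) : ℝ :=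
  ∑ k ∈ Finset.range (K + 1), θ k * x ^ k

/-- The matrix polynomial filter `g_θ(L) = ∑_{k=0}^{K} θ_k L^k`. -/
noncomputable def gmat {n : ℕ} (K : ℕ) (θ : ℕ → ℝ) (L : Matrix (Fin n) (Fin n) ℝ) :
    Matrix (Fin n) (Fin n) ℝ :=
  ∑ k ∈ Finset.range (K + 1), θ k • L ^ k

/-!
In the common eigenbasis `g_θ(L) = U D Uᵀ` with `D = diag (g_θ(λ_i))`, so with `Y = Uᵀ X W`,
`g_θ(L_s) X_s W - g_θ(L_t) X_t W = U ((D_s - D_t) Y_s + D_t (Y_s - Y_t))`.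
Neither `σ` (entrywise), nor `U`, nor `W` with `‖W‖_op ≤ 1` increases Frobenius norms, and
`‖Y_s‖_F ≤ ‖X_s‖_F ≤ 1`. Hence the first term is at most `‖D_s - D_t‖_F ≤ C ‖Λ_s - Λ_t‖_F =
C ‖L_s - L_t‖_F`, and the second at most `max_i |g_θ(λ_{t,i})| · ‖X_s - X_t‖_F`.
-/

open Matrix

section Frobenius

attribute [local instance] Matrix.frobeniusNormedAddCommGroup

theorem frobNorm_eq_norm {n m : ℕ} (A : Matrix (Fin n) (Fin m) ℝ) : frobNorm A = ‖A‖ := by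
  rw [frobenius_norm_def, frobNorm, Real.sqrt_eq_rpow]
  simp only [Real.norm_eq_abs, Real.rpow_two, sq_abs]

theorem frobNorm_add_le {n m : ℕ} (A B : Matrix (Fin n) (Fin m) ℝ) :
    frobNorm (A + B) ≤ frobNorm A + frobNorm B := by
  simpa only [frobNorm_eq_norm] using norm_add_le A B

theorem frobNorm_mul_le {l n m : ℕ} (A : Matrix (Fin l) (Fin n) ℝ) (B : Matrix (Fin n) (Fin m) ℝ) :
    frobNorm (A * B) ≤ frobNorm A * frobNorm B := by
  simpa only [frobNorm_eq_norm] using frobenius_norm_mul A B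

theorem frobNorm_transpose {n m : ℕ} (A : Matrix (Fin n) (Fin m) ℝ) :
    frobNorm Aᵀ = frobNorm A := by
  simpa only [frobNorm_eq_norm] using frobenius_norm_transpose A

end Frobenius

theorem frobNorm_nonneg {n m : ℕ} (A : Matrix (Fin n) (Fin m) ℝ) : 0 ≤ frobNorm A :=
  Real.sqrt_nonneg _

theorem frobNorm_le_mul_of_abs_le {n m : ℕ} {c : ℝ} {A B : Matrix (Fin n) (Fin m) ℝ}
    (h : ∀ i j, |A i j| ≤ c * |B i j|) : frobNorm A ≤ c * frobNorm B := by
  -- `c` may be negative, in which case the hypothesis forces `A = B = 0`.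
  rcases le_or_gt 0 c with hc | hc
  · rw [frobNorm, frobNorm, ← Real.sqrt_sq hc, ← Real.sqrt_mul (sq_nonneg c), Finset.mul_sum]
    refine Real.sqrt_le_sqrt (Finset.sum_le_sum fun i _ => ?_)
    rw [Finset.mul_sum]
    refine Finset.sum_le_sum fun j _ => ?_
    rw [← sq_abs (A i j), ← sq_abs (B i j), ← mul_pow]
    exact pow_le_pow_left₀ (abs_nonneg _) (h i j) 2
  · have hB : ∀ i j, B i j = 0 := fun i j =>
      abs_eq_zero.mp (le_antisymm (nonpos_of_mul_nonneg_right ((abs_nonneg _).trans (h i j)) hc)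
        (abs_nonneg _))
    have hA : ∀ i j, A i j = 0 := fun i j =>
      abs_eq_zero.mp (le_antisymm (by simpa [hB] using h i j) (abs_nonneg _))
    simp [frobNorm, hA, hB]

theorem frobNorm_map_sub_map_le {n m : ℕ} {σ : ℝ → ℝ} (hσ : ∀ a b, |σ b - σ a| ≤ |b - a|)
    (A B : Matrix (Fin n) (Fin m) ℝ) :
    frobNorm (A.map σ - B.map σ) ≤ frobNorm (A - B) := by
  simpa using frobNorm_le_mul_of_abs_le (c := 1) fun i j => by simpa using hσ (B i j) (A i j)

theorem frobNorm_diagonal_le_mul {n : ℕ} {c : ℝ} {a b : Fin n → ℝ} (h : ∀ i, |a i| ≤ c * |b i|) :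
    frobNorm (diagonal a) ≤ c * frobNorm (diagonal b) := by
  refine frobNorm_le_mul_of_abs_le fun i j => ?_
  rcases eq_or_ne i j with rfl | hij
  · simpa using h i
  · simp [diagonal_apply_ne _ hij]

theorem frobNorm_diagonal_mul_le {n m : ℕ} {c : ℝ} {a : Fin n → ℝ} (h : ∀ i, |a i| ≤ c)
    (Y : Matrix (Fin n) (Fin m) ℝ) : frobNorm (diagonal a * Y) ≤ c * frobNorm Y :=
  frobNorm_le_mul_of_abs_le fun i j => by
    rw [diagonal_mul, abs_mul]; exact mul_le_mul_of_nonneg_right (h i) (abs_nonneg _)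

theorem frobNorm_sq_eq_trace {n m : ℕ} (A : Matrix (Fin n) (Fin m) ℝ) :
    frobNorm A ^ 2 = trace (Aᵀ * A) := by
  rw [frobNorm, Real.sq_sqrt (by positivity), Finset.sum_comm]
  simp [trace, mul_apply, sq]

theorem frobNorm_orthogonal_mul {n m : ℕ} {U : Matrix (Fin n) (Fin n) ℝ} (hU : Uᵀ * U = 1)
    (M : Matrix (Fin n) (Fin m) ℝ) : frobNorm (U * M) = frobNorm M := by
  rw [← sq_eq_sq₀ (frobNorm_nonneg _) (frobNorm_nonneg _), frobNorm_sq_eq_trace,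
    frobNorm_sq_eq_trace, transpose_mul, Matrix.mul_assoc, ← Matrix.mul_assoc Uᵀ, hU,
    Matrix.one_mul]

theorem frobNorm_mul_orthogonal_transpose {n m : ℕ} {U : Matrix (Fin n) (Fin n) ℝ}
    (hU : Uᵀ * U = 1) (M : Matrix (Fin m) (Fin n) ℝ) : frobNorm (M * Uᵀ) = frobNorm M := by
  rw [← frobNorm_transpose, transpose_mul, transpose_transpose, frobNorm_orthogonal_mul hU,
    frobNorm_transpose]

theorem opNorm_nonneg {n m : ℕ} (A : Matrix (Fin m) (Fin n) ℝ) : 0 ≤ opNorm A :=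
  norm_nonneg _

theorem norm_vecMul_le_opNorm {d d' : ℕ} (W : Matrix (Fin d) (Fin d') ℝ) (v : Fin d → ℝ) :
    ‖WithLp.toLp 2 (v ᵥ* W)‖ ≤ opNorm W * ‖WithLp.toLp 2 v‖ := by
  open scoped Matrix.Norms.L2Operator in
  have hWt : ‖Wᵀ‖ = opNorm W := by
    rw [← conjTranspose_eq_transpose_of_trivial, l2_opNorm_conjTranspose]; rfl
  simpa [hWt, mulVec_transpose] using l2_opNorm_mulVec Wᵀ (WithLp.toLp 2 v)

theorem frobNorm_mul_le_mul_opNorm {n d d' : ℕ} (X : Matrix (Fin n) (Fin d) ℝ)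
    (W : Matrix (Fin d) (Fin d') ℝ) : frobNorm (X * W) ≤ frobNorm X * opNorm W := by
  have hW := opNorm_nonneg W
  rw [frobNorm, frobNorm, mul_comm, ← Real.sqrt_sq hW, ← Real.sqrt_mul (sq_nonneg _),
    Finset.mul_sum]
  refine Real.sqrt_le_sqrt (Finset.sum_le_sum fun i _ => ?_)
  have hrow := pow_le_pow_left₀ (norm_nonneg _) (norm_vecMul_le_opNorm W (X i)) 2
  simpa [EuclideanSpace.norm_sq_eq, mul_pow, ← mul_apply_eq_vecMul] using hrow

theorem frobNorm_orthogonal_mul_mul_le {n d d' : ℕ} {U : Matrix (Fin n) (Fin n) ℝ}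
    (hU : U * Uᵀ = 1) (X : Matrix (Fin n) (Fin d) ℝ) {W : Matrix (Fin d) (Fin d') ℝ}
    (hW : opNorm W ≤ 1) : frobNorm (Uᵀ * X * W) ≤ frobNorm X := by
  rw [Matrix.mul_assoc, frobNorm_orthogonal_mul (by rwa [transpose_transpose])]
  exact (frobNorm_mul_le_mul_opNorm X W).trans (mul_le_of_le_one_right (frobNorm_nonneg X) hW)

theorem gmat_diagonal {n : ℕ} (K : ℕ) (θ : ℕ → ℝ) (lam : Fin n → ℝ) :
    gmat K θ (diagonal lam) = diagonal fun i => gpoly K θ (lam i) := by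
  ext i j
  rcases eq_or_ne i j with rfl | hij
  · simp [gmat, gpoly, diagonal_pow, Matrix.sum_apply]
  · simp [gmat, diagonal_pow, Matrix.sum_apply, diagonal_apply_ne _ hij]

theorem gmat_orthogonal_conj {n : ℕ} (K : ℕ) (θ : ℕ → ℝ) {U : Matrix (Fin n) (Fin n) ℝ}
    (hU : U * Uᵀ = 1) (hU' : Uᵀ * U = 1) (D : Matrix (Fin n) (Fin n) ℝ) :
    gmat K θ (U * D * Uᵀ) = U * gmat K θ D * Uᵀ := by
  set L := U * D * Uᵀ
  have hsemiconj : SemiconjBy U D L := by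
    rw [SemiconjBy, Matrix.mul_assoc, hU', Matrix.mul_one]
  have hpow (k : ℕ) : L ^ k = U * D ^ k * Uᵀ := by
    rw [(hsemiconj.pow_right k).eq, Matrix.mul_assoc, hU, Matrix.mul_one]
  simp only [gmat, Finset.mul_sum, Finset.sum_mul, hpow, Matrix.mul_smul, Matrix.smul_mul]

/-- aligned-eigenbasis case of the SA-GDA stability lemma. For GNN layers
`f(L, X) = σ(g_θ(L) X W)` with shared eigenvector matrix `U`, a spectrally `C`-Lipschitz
polynomial filter, a 1-Lipschitz pointwise nonlinearity, `‖X_s‖_F ≤ 1` and `‖W‖_op ≤ 1`: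
`‖f(L_s,X_s) − f(L_t,X_t)‖_F ≤ C ‖L_s − L_t‖_F + (max_i |g_θ(λ_{t,i})|) ‖X_s − X_t‖_F`. -/
theorem stmt_4 {n d d' : ℕ} (hn : 0 < n) (K : ℕ) (θ : ℕ → ℝ)
    (U : Matrix (Fin n) (Fin n) ℝ) (hU : U * Uᵀ = 1) (hU' : Uᵀ * U = 1)
    (lams lamt : Fin n → ℝ) (Ls Lt : Matrix (Fin n) (Fin n) ℝ)
    (hLs : Ls = U * Matrix.diagonal lams * Uᵀ)
    (hLt : Lt = U * Matrix.diagonal lamt * Uᵀ)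
    (C : ℝ)
    (hC : ∀ i, |gpoly K θ (lams i) - gpoly K θ (lamt i)| ≤ C * |lams i - lamt i|)
    (σ : ℝ → ℝ) (hσ : ∀ a b : ℝ, |σ b - σ a| ≤ |b - a|)
    (Xs Xt : Matrix (Fin n) (Fin d) ℝ) (hXs : frobNorm Xs ≤ 1)
    (W : Matrix (Fin d) (Fin d') ℝ) (hW : opNorm W ≤ 1) :
    frobNorm ((gmat K θ Ls * Xs * W).map σ - (gmat K θ Lt * Xt * W).map σ)
      ≤ C * frobNorm (Ls - Lt)
        + (Finset.univ.sup'
            (⟨⟨0, hn⟩, Finset.mem_univ _⟩ : (Finset.univ : Finset (Fin n)).Nonempty)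
            (fun i => |gpoly K θ (lamt i)|)) * frobNorm (Xs - Xt) := by
  set M := Finset.univ.sup' _ fun i => |gpoly K θ (lamt i)|
  set gs : Fin n → ℝ := fun i => gpoly K θ (lams i)
  set gt : Fin n → ℝ := fun i => gpoly K θ (lamt i)
  set Ys := Uᵀ * Xs * W
  set Yt := Uᵀ * Xt * W
  have hgt (i : Fin n) : |gt i| ≤ M := Finset.le_sup' (fun i => |gt i|) (Finset.mem_univ i)
  have hM : 0 ≤ M := (abs_nonneg _).trans (hgt ⟨0, hn⟩)
  have heigen : gmat K θ Ls * Xs * W - gmat K θ Lt * Xt * W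
      = U * ((diagonal gs - diagonal gt) * Ys + diagonal gt * (Ys - Yt)) := by
    rw [hLs, hLt, gmat_orthogonal_conj K θ hU hU', gmat_orthogonal_conj K θ hU hU',
      gmat_diagonal, gmat_diagonal]
    simp only [Ys, Yt, Matrix.mul_sub, Matrix.sub_mul, Matrix.mul_add, Matrix.mul_assoc]
    abel
  have hspectral : frobNorm (diagonal gs - diagonal gt) ≤ C * frobNorm (Ls - Lt) := by
    rw [hLs, hLt, ← Matrix.sub_mul, ← Matrix.mul_sub, frobNorm_mul_orthogonal_transpose hU',
      frobNorm_orthogonal_mul hU', diagonal_sub, diagonal_sub]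
    exact frobNorm_diagonal_le_mul hC
  have hYt : Ys - Yt = Uᵀ * (Xs - Xt) * W := by
    simp only [Ys, Yt, Matrix.mul_sub, Matrix.sub_mul]
  calc frobNorm ((gmat K θ Ls * Xs * W).map σ - (gmat K θ Lt * Xt * W).map σ)
      ≤ frobNorm (gmat K θ Ls * Xs * W - gmat K θ Lt * Xt * W) := frobNorm_map_sub_map_le hσ _ _
    _ = frobNorm ((diagonal gs - diagonal gt) * Ys + diagonal gt * (Ys - Yt)) := by
        rw [heigen, frobNorm_orthogonal_mul hU']
    _ ≤ frobNorm (diagonal gs - diagonal gt) * frobNorm Ys + M * frobNorm (Ys - Yt) :=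
        (frobNorm_add_le _ _).trans
          (add_le_add (frobNorm_mul_le _ _) (frobNorm_diagonal_mul_le hgt _))
    _ ≤ C * frobNorm (Ls - Lt) + M * frobNorm (Xs - Xt) := by
        refine add_le_add ?_ (mul_le_mul_of_nonneg_left ?_ hM)
        · exact (mul_le_of_le_one_right (frobNorm_nonneg _)
            ((frobNorm_orthogonal_mul_mul_le hU Xs hW).trans hXs)).trans hspectral
        · rw [hYt]; exact frobNorm_orthogonal_mul_mul_le hU _ hW
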